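/- Let p be a prime, q := p if p is odd and q := 4 if p = 2, let n ≥ 0, and φ := φ(q·pⁿ). Let f be a positive multiple of q·pⁿ and c an odd integer coprime to f. Then, with A_f := (−1/(f·φ))·Σ_{1≤a≤f, gcd(a,f)=1} a^φ·[ā] in ℚ_p[(ℤ/fℤ)ˣ], the element (1 − c^φ·[σ_c])·A_f − Σ_{1≤a≤f, gcd(a,f)=1} λ_a(c)·a^{−1}·[ā] lies in p^{n+1}·ℤ_p[(ℤ/fℤ)ˣ], where a^{−1} denotes the inverse of a in ℤ_p, a′_c is the unique integer in [1,f] with a′_c·c ≡ a (mod f), and λ_a(c) := (a′_c·c − a)/f ∈ ℤ. -/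

import Mathlib

/-!
Since `a'_c · c ≡ a (mod f)`, multiplication by `[σ_c]` permutes the basis elements `[ā]`, so the
coefficient of `[ā]` in the difference is `((a + λ f)^φ - a^φ)/(f φ) - λ/a`, where `λ = λ_a(c)`.
Expanding binomially, the linear term gives `λ (a^φ - 1)/a`, which lies in `p^{n+1} ℤ_p` by Euler's
theorem because `p^{n+1} ∣ q pⁿ`. The term of degree `k + 1 ≥ 2` is an integer multiple of
`f^k/(k+1)`, and `q pⁿ = p^{n+1+e}` with `e = [p = 2]` divides `f`, so its valuation is at least
`k (n+1+e) - v_p(k+1) ≥ n+1` because `v_p(k+1) < k + e`.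
-/

open scoped BigOperators

/-- `A_f := (−1/(f·φ))·Σ_{1≤a≤f, gcd(a,f)=1} a^φ·[ā] ∈ ℚ_p[(ℤ/fℤ)ˣ]`. -/
noncomputable def aElt (p : ℕ) [Fact p.Prime] (φ f : ℕ) :
    MonoidAlgebra ℚ_[p] (ZMod f)ˣ :=
  (-(1 / ((f : ℚ_[p]) * (φ : ℚ_[p])))) •
    ∑ a ∈ Finset.Icc 1 f,
      if h : Nat.Coprime a f then
        ((a : ℚ_[p]) ^ φ) • MonoidAlgebra.single (ZMod.unitOfCoprime a h) (1 : ℚ_[p])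
      else 0

open Finset MonoidAlgebra

theorem ite_mul_pow_eq_pow (p n : ℕ) :
    (if p = 2 then 4 else p) * p ^ n = p ^ (n + 1 + if p = 2 then 1 else 0) := by
  split_ifs with h2
  · subst h2
    ring
  · ring

theorem Int.natCast_dvd_pow_totient_sub_one {a m : ℕ} (h : a.Coprime m) :
    (m : ℤ) ∣ (a : ℤ) ^ m.totient - 1 := by
  exact_mod_cast (Int.natCast_modEq_iff.2 (Nat.ModEq.pow_totient h)).symm.dvd

theorem padicValNat_add_one_lt {p k : ℕ} [hp : Fact p.Prime] (hk : 1 ≤ k) :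
    padicValNat p (k + 1) < k + if p = 2 then 1 else 0 := by
  have hle : p ^ padicValNat p (k + 1) ≤ k + 1 := Nat.le_of_dvd k.succ_pos pow_padicValNat_dvd
  split_ifs with h2
  · subst h2
    exact (Nat.pow_lt_pow_iff_right one_lt_two).1 (hle.trans_lt Nat.lt_two_pow_self)
  · by_contra! hkv
    have h2p : 2 < p := lt_of_le_of_ne hp.out.two_le (Ne.symm h2)
    have : p ^ k ≤ k + 1 := (Nat.pow_le_pow_right hp.out.pos (by omega)).trans hle
    have : 2 ^ k < p ^ k := Nat.pow_lt_pow_left h2p (by omega)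
    have : k < 2 ^ k := Nat.lt_two_pow_self
    omega

theorem Padic.norm_natCast_pow_div_le {p n f k : ℕ} [hp : Fact p.Prime] (hk : 1 ≤ k)
    (hf : p ^ (n + 1 + if p = 2 then 1 else 0) ∣ f) :
    ‖(f : ℚ_[p]) ^ k / (k + 1 : ℕ)‖ ≤ (p : ℝ) ^ (-((n + 1 : ℕ) : ℤ)) := by
  set e := if p = 2 then 1 else 0
  have hp0 : (0 : ℝ) < p := by exact_mod_cast hp.out.pos
  have hfk : ‖(((f ^ k : ℕ) : ℤ) : ℚ_[p])‖ ≤ (p : ℝ) ^ (-((k * (n + 1 + e) : ℕ) : ℤ)) := by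
    rw [Padic.norm_int_le_pow_iff_dvd, pow_mul']
    exact_mod_cast pow_dvd_pow_of_dvd hf k
  have hk1 : ‖((k + 1 : ℕ) : ℚ_[p])‖ = (p : ℝ) ^ (-(padicValNat p (k + 1) : ℤ)) := by
    rw [Padic.norm_eq_zpow_neg_valuation (by exact_mod_cast k.succ_ne_zero),
      Padic.valuation_natCast]
  have hexp : padicValNat p (k + 1) + (n + 1) ≤ k * (n + 1 + e) := by
    have hv : padicValNat p (k + 1) < k + e := padicValNat_add_one_lt hk
    nlinarith [Nat.mul_le_mul_right (n + e) hk]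
  rw [norm_div, hk1, div_eq_mul_inv, ← zpow_neg, neg_neg]
  rw [Int.cast_natCast, Nat.cast_pow] at hfk
  calc ‖(f : ℚ_[p]) ^ k‖ * (p : ℝ) ^ (padicValNat p (k + 1) : ℤ)
      ≤ (p : ℝ) ^ (-((k * (n + 1 + e) : ℕ) : ℤ)) * (p : ℝ) ^ (padicValNat p (k + 1) : ℤ) := by
        gcongr
    _ ≤ (p : ℝ) ^ (-((n + 1 : ℕ) : ℤ)) := by
        rw [← zpow_add₀ hp0.ne']
        exact zpow_le_zpow_right₀ (by exact_mod_cast hp.out.one_le) (by omega)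

theorem add_pow_sub_pow_div_eq_sum {K : Type*} [Field K] [CharZero K] (x y : K) (m : ℕ) :
    ((y + x) ^ (m + 1) - y ^ (m + 1)) / (m + 1 : ℕ) =
      ∑ k ∈ range (m + 1), (m.choose k : K) * x ^ (k + 1) * y ^ (m - k) / (k + 1 : ℕ) := by
  rw [add_comm, add_pow, sum_range_succ', pow_zero, one_mul, Nat.choose_zero_right, Nat.cast_one,
    mul_one, Nat.sub_zero, add_sub_cancel_right, sum_div]
  refine sum_congr rfl fun k _ => ?_
  have hchoose : ((m + 1 : ℕ) : K) * m.choose k = (m + 1).choose (k + 1) * (k + 1 : ℕ) := by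
    exact_mod_cast Nat.add_one_mul_choose_eq m k
  rw [Nat.add_sub_add_right,
    div_eq_div_iff (Nat.cast_ne_zero.2 m.succ_ne_zero) (Nat.cast_ne_zero.2 k.succ_ne_zero)]
  linear_combination -x ^ (k + 1) * y ^ (m - k) * hchoose

theorem Padic.norm_add_mul_pow_sub_pow_div_sub_le {p n φ f b : ℕ} {L : ℤ} [Fact p.Prime]
    (hφ : φ ≠ 0) (hf0 : f ≠ 0) (hf : p ^ (n + 1 + if p = 2 then 1 else 0) ∣ f) (hb : p.Coprime b)
    (hbφ : (p : ℤ) ^ (n + 1) ∣ (b : ℤ) ^ φ - 1) :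
    ‖(((b : ℚ_[p]) + L * f) ^ φ - (b : ℚ_[p]) ^ φ) / (f * φ) - L * (b : ℚ_[p])⁻¹‖ ≤
      (p : ℝ) ^ (-((n + 1 : ℕ) : ℤ)) := by
  obtain ⟨m, rfl⟩ := Nat.exists_eq_add_one.2 (Nat.pos_of_ne_zero hφ)
  have hfQ : (f : ℚ_[p]) ≠ 0 := Nat.cast_ne_zero.2 hf0
  have hbQ : (b : ℚ_[p]) ≠ 0 := by
    rintro hb0
    rw [Nat.cast_eq_zero.1 hb0, Nat.coprime_zero_right] at hb
    exact (Fact.out : p.Prime).one_lt.ne' hb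
  -- the linear term `L b^m` of the expansion combines with `-L/b` into `L (b^φ - 1)/b`
  have hsplit : (((b : ℚ_[p]) + L * f) ^ (m + 1) - (b : ℚ_[p]) ^ (m + 1)) / (f * (m + 1 : ℕ))
      - L * (b : ℚ_[p])⁻¹ =
      (∑ k ∈ range m, ((m.choose (k + 1) * L ^ (k + 2) * b ^ (m - (k + 1)) : ℤ) : ℚ_[p]) *
        ((f : ℚ_[p]) ^ (k + 1) / (k + 1 + 1 : ℕ))) +
      ((L * ((b : ℤ) ^ (m + 1) - 1) : ℤ) : ℚ_[p]) * (b : ℚ_[p])⁻¹ := by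
    rw [mul_comm (f : ℚ_[p]), ← div_div, add_pow_sub_pow_div_eq_sum, sum_div, sum_range_succ',
      add_sub_assoc]
    congr 1
    · refine sum_congr rfl fun k _ => ?_
      push_cast
      field_simp
      ring
    · rw [Nat.choose_zero_right, Nat.sub_zero]
      push_cast
      field_simp
      ring
  rw [hsplit]
  refine (Padic.nonarchimedean _ _).trans (max_le ?_ ?_)
  · refine IsUltrametricDist.norm_sum_le_of_forall_le_of_nonneg (by positivity) fun k _ => ?_
    rw [norm_mul]
    exact (mul_le_of_le_one_left (norm_nonneg _) (Padic.norm_int_le_one _)).trans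
      (Padic.norm_natCast_pow_div_le k.succ_pos hf)
  · rw [norm_mul, norm_inv, Padic.norm_natCast_eq_one_iff.2 hb, inv_one, mul_one,
      Padic.norm_int_le_pow_iff_dvd]
    exact dvd_mul_of_dvd_right hbφ L

theorem Nat.ModEq.eq_of_mem_Icc {f a b : ℕ} (h : a ≡ b [MOD f]) (ha : a ∈ Icc 1 f)
    (hb : b ∈ Icc 1 f) : a = b := by
  rw [mem_Icc] at ha hb
  exact h.eq_of_abs_lt (abs_sub_lt_iff.2 ⟨by omega, by omega⟩)

theorem ZMod.unitOfCoprime_mul_unitOfCoprime {f a b c : ℕ} (hc : c.Coprime f) (hb : b.Coprime f)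
    (ha : a.Coprime f) (h : b * c ≡ a [MOD f]) :
    ZMod.unitOfCoprime c hc * ZMod.unitOfCoprime b hb = ZMod.unitOfCoprime a ha := by
  ext
  rw [Units.val_mul, ZMod.coe_unitOfCoprime, ZMod.coe_unitOfCoprime, ZMod.coe_unitOfCoprime,
    mul_comm, ← Nat.cast_mul, (ZMod.natCast_eq_natCast_iff _ _ _).2 h]

def coprimeReps (f : ℕ) : Finset ℕ := {a ∈ Icc 1 f | a.Coprime f}

theorem mem_coprimeReps {f a : ℕ} : a ∈ coprimeReps f ↔ a ∈ Icc 1 f ∧ a.Coprime f := mem_filter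

theorem bijOn_coprimeReps_of_mul_modEq {f c : ℕ} {a' : ℕ → ℕ}
    (ha' : ∀ a, 1 ≤ a → a ≤ f → a.Coprime f → 1 ≤ a' a ∧ a' a ≤ f ∧ a' a * c ≡ a [MOD f]) :
    Set.BijOn a' (coprimeReps f) (coprimeReps f) := by
  have hmem : ∀ a ∈ coprimeReps f, a' a ∈ Icc 1 f ∧ a' a * c ≡ a [MOD f] := by
    intro a ha
    obtain ⟨ha, hcop⟩ := mem_coprimeReps.1 ha
    obtain ⟨h1, h2, h3⟩ := ha' a (mem_Icc.1 ha).1 (mem_Icc.1 ha).2 hcop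
    exact ⟨mem_Icc.2 ⟨h1, h2⟩, h3⟩
  have hmaps : Set.MapsTo a' (coprimeReps f) (coprimeReps f) := by
    intro a ha
    obtain ⟨h1, h2⟩ := hmem a ha
    refine mem_coprimeReps.2 ⟨h1, Nat.Coprime.coprime_mul_right (k := c) ?_⟩
    rw [Nat.Coprime, h2.gcd_eq]
    exact (mem_coprimeReps.1 ha).2
  have hinj : Set.InjOn a' (coprimeReps f) := by
    intro a ha b hb hab
    have := (hmem a ha).2.symm.trans (hab ▸ (hmem b hb).2)
    exact this.eq_of_mem_Icc (mem_coprimeReps.1 ha).1 (mem_coprimeReps.1 hb).1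
  exact ⟨hmaps, hinj, surjOn_of_injOn_of_card_le _ hmaps hinj le_rfl⟩

section CoprimeSum

variable {R : Type*} (f : ℕ)

noncomputable def coprimeSum [Semiring R] (r : ℕ → R) : MonoidAlgebra R (ZMod f)ˣ :=
  ∑ a ∈ Icc 1 f, if h : a.Coprime f then r a • single (ZMod.unitOfCoprime a h) 1 else 0

variable {f}

theorem coprimeSum_congr [Semiring R] {r s : ℕ → R}
    (h : ∀ a ∈ Icc 1 f, a.Coprime f → r a = s a) : coprimeSum f r = coprimeSum f s := by
  refine sum_congr rfl fun a ha => ?_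
  split_ifs with hcop
  · rw [h a ha hcop]
  · rfl

theorem coprimeSum_sub [Ring R] (r s : ℕ → R) :
    coprimeSum f r - coprimeSum f s = coprimeSum f (r - s) := by
  rw [coprimeSum, coprimeSum, coprimeSum, ← sum_sub_distrib]
  refine sum_congr rfl fun a _ => ?_
  split_ifs
  · rw [Pi.sub_apply, sub_smul]
  · rw [sub_zero]

theorem coprimeSum_eq_sum_coprimeReps [Semiring R] (r : ℕ → R) :
    coprimeSum f r = ∑ a ∈ coprimeReps f,
      if h : a.Coprime f then r a • single (ZMod.unitOfCoprime a h) 1 else 0 :=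
  (sum_filter_of_ne fun _ _ hne => by_contra fun hcop => hne (dif_neg hcop)).symm

theorem smul_single_mul_coprimeSum [CommSemiring R] {c : ℕ} (hc : c.Coprime f) (t : R)
    {a' : ℕ → ℕ}
    (ha' : ∀ a, 1 ≤ a → a ≤ f → a.Coprime f → 1 ≤ a' a ∧ a' a ≤ f ∧ a' a * c ≡ a [MOD f])
    (r : ℕ → R) :
    (t • single (ZMod.unitOfCoprime c hc) 1) * coprimeSum f r =
      coprimeSum f (fun a => t * r (a' a)) := by
  have hbij := bijOn_coprimeReps_of_mul_modEq ha'
  rw [coprimeSum_eq_sum_coprimeReps, coprimeSum_eq_sum_coprimeReps, mul_sum]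
  symm
  refine sum_nbij a' hbij.mapsTo hbij.injOn hbij.surjOn fun a ha => ?_
  have hcop' := (mem_coprimeReps.1 (hbij.mapsTo ha)).2
  obtain ⟨ha, hcop⟩ := mem_coprimeReps.1 ha
  rw [dif_pos hcop, dif_pos hcop', smul_mul_smul_comm, single_mul_single, mul_one,
    ZMod.unitOfCoprime_mul_unitOfCoprime hc hcop' hcop
      (ha' a (mem_Icc.1 ha).1 (mem_Icc.1 ha).2 hcop).2.2]

theorem norm_coeff_coprimeSum_le [NormedRing R] [NormOneClass R] [IsUltrametricDist R]
    {r : ℕ → R} {C : ℝ} (hC : 0 ≤ C) (hr : ∀ a ∈ Icc 1 f, a.Coprime f → ‖r a‖ ≤ C)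
    (g : (ZMod f)ˣ) : ‖(coprimeSum f r).coeff g‖ ≤ C := by
  rw [coprimeSum, coeff_sum, Finset.sum_apply']
  refine IsUltrametricDist.norm_sum_le_of_forall_le_of_nonneg hC fun a ha => ?_
  split_ifs with hcop
  · rw [coeff_smul_apply, coeff_single, Finsupp.single_apply]
    split_ifs
    · simpa using hr a ha hcop
    · simpa using hC
  · simpa using hC

end CoprimeSum

theorem aElt_eq_coprimeSum (p : ℕ) [Fact p.Prime] (φ f : ℕ) :
    aElt p φ f = coprimeSum f (fun a => -(1 / ((f : ℚ_[p]) * φ)) * (a : ℚ_[p]) ^ φ) := by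
  rw [aElt, coprimeSum, smul_sum]
  refine sum_congr rfl fun a _ => ?_
  split_ifs
  · rw [smul_smul]
  · rw [smul_zero]

theorem Padic.exists_eq_smul_of_norm_coeff_le {p : ℕ} [Fact p.Prime] {G : Type*}
    (x : MonoidAlgebra ℚ_[p] G) {π : ℚ_[p]} (hπ : π ≠ 0) (hx : ∀ g, ‖x.coeff g‖ ≤ ‖π‖) :
    ∃ y : MonoidAlgebra ℚ_[p] G, (∀ g, ∃ z : ℤ_[p], y.coeff g = z) ∧ x = π • y := by
  refine ⟨π⁻¹ • x, fun g => ⟨⟨(π⁻¹ • x).coeff g, ?_⟩, rfl⟩, (smul_inv_smul₀ hπ x).symm⟩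
  rw [coeff_smul_apply, smul_eq_mul, norm_mul, norm_inv]
  exact inv_mul_le_one_of_le₀ (hx g) (norm_nonneg π)

theorem one_sub_smul_single_mul_aElt_sub_coprimeSum {p : ℕ} [Fact p.Prime] {φ f c : ℕ}
    (hc : c.Coprime f) {a' : ℕ → ℕ}
    (ha' : ∀ a, 1 ≤ a → a ≤ f → a.Coprime f → 1 ≤ a' a ∧ a' a ≤ f ∧ a' a * c ≡ a [MOD f])
    {lam : ℕ → ℤ} (hlam : ∀ a, 1 ≤ a → a ≤ f → a.Coprime f → lam a * f = (a' a : ℤ) * c - a) :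
    (1 - ((c : ℚ_[p]) ^ φ) • single (ZMod.unitOfCoprime c hc) 1) * aElt p φ f
      - coprimeSum f (fun a => (lam a : ℚ_[p]) * (a : ℚ_[p])⁻¹) =
      coprimeSum f (fun a => (((a : ℚ_[p]) + lam a * f) ^ φ - (a : ℚ_[p]) ^ φ) / (f * φ)
        - lam a * (a : ℚ_[p])⁻¹) := by
  rw [sub_mul, one_mul, aElt_eq_coprimeSum, smul_single_mul_coprimeSum hc _ ha',
    coprimeSum_sub, coprimeSum_sub]
  refine coprimeSum_congr fun a ha hcop => ?_
  have hca : (c : ℚ_[p]) * a' a = a + lam a * f := by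
    have := hlam a (mem_Icc.1 ha).1 (mem_Icc.1 ha).2 hcop
    exact_mod_cast (by linarith : (c : ℤ) * a' a = a + lam a * f)
  simp only [Pi.sub_apply]
  rw [← hca, mul_pow]
  ring

theorem statement10_general (p : ℕ) [Fact p.Prime] (n : ℕ)
    (q : ℕ) (hq : q = if p = 2 then 4 else p)
    (φ : ℕ) (hφ : φ = (q * p ^ n).totient)
    (f : ℕ) (hmul : q * p ^ n ∣ f)
    (c : ℕ) (hc : Nat.Coprime c f)
    -- `a' a` is the unique integer in `[1,f]` with `a' a · c ≡ a (mod f)`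
    (a' : ℕ → ℕ)
    (ha' : ∀ a, 1 ≤ a → a ≤ f → Nat.Coprime a f →
      1 ≤ a' a ∧ a' a ≤ f ∧ a' a * c ≡ a [MOD f])
    -- `lam a = λ_a(c) := (a' a · c − a)/f ∈ ℤ`
    (lam : ℕ → ℤ)
    (hlam : ∀ a, 1 ≤ a → a ≤ f → Nat.Coprime a f →
      lam a * f = (a' a : ℤ) * c - a) :
    -- the difference lies in `p^{n+1}·ℤ_p[(ℤ/fℤ)ˣ]`
    ∃ y : MonoidAlgebra ℚ_[p] (ZMod f)ˣ,
      (∀ g : (ZMod f)ˣ, ∃ z : ℤ_[p], y.coeff g = (z : ℚ_[p])) ∧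
      (1 - ((c : ℚ_[p]) ^ φ) •
            MonoidAlgebra.single (ZMod.unitOfCoprime c hc) (1 : ℚ_[p])) * aElt p φ f
        - (∑ a ∈ Finset.Icc 1 f,
            if h : Nat.Coprime a f then
              ((lam a : ℚ_[p]) * (a : ℚ_[p])⁻¹) •
                MonoidAlgebra.single (ZMod.unitOfCoprime a h) (1 : ℚ_[p])
            else 0)
      = ((p : ℚ_[p]) ^ (n + 1)) • y := by
  have hp : p.Prime := Fact.out
  subst hq
  rw [ite_mul_pow_eq_pow] at hφ hmul
  have hφ0 : φ ≠ 0 := hφ ▸ (Nat.totient_pos.2 (pow_pos hp.pos _)).ne'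
  have hpf : p ∣ f := (dvd_pow_self p (by omega)).trans hmul
  have hbound : ∀ a ∈ Icc 1 f, a.Coprime f →
      ‖(((a : ℚ_[p]) + lam a * f) ^ φ - (a : ℚ_[p]) ^ φ) / (f * φ) - lam a * (a : ℚ_[p])⁻¹‖ ≤
        ‖(p : ℚ_[p]) ^ (n + 1)‖ := by
    intro a ha hcop
    have heuler : (p : ℤ) ^ (n + 1) ∣ (a : ℤ) ^ φ - 1 := by
      refine dvd_trans ?_ (hφ ▸ Int.natCast_dvd_pow_totient_sub_one (hcop.coprime_dvd_right hmul))
      exact_mod_cast pow_dvd_pow p (Nat.le_add_right _ _)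
    rw [Padic.norm_p_pow]
    exact Padic.norm_add_mul_pow_sub_pow_div_sub_le hφ0 (by rw [mem_Icc] at ha; omega) hmul
      (hcop.coprime_dvd_right hpf).symm heuler
  obtain ⟨y, hy, hxy⟩ := Padic.exists_eq_smul_of_norm_coeff_le _
    (pow_ne_zero (n + 1) (Nat.cast_ne_zero.2 hp.ne_zero))
    (norm_coeff_coprimeSum_le (norm_nonneg _) hbound)
  exact ⟨y, hy, (one_sub_smul_single_mul_aElt_sub_coprimeSum hc ha' hlam).trans hxy⟩

theorem statement10 (p : ℕ) [Fact p.Prime] (n : ℕ)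
    (q : ℕ) (hq : q = if p = 2 then 4 else p)
    (φ : ℕ) (hφ : φ = (q * p ^ n).totient)
    (f : ℕ) (hf : 0 < f) (hmul : q * p ^ n ∣ f)
    (c : ℕ) (hcodd : Odd c) (hc : Nat.Coprime c f)
    -- `a' a` is the unique integer in `[1,f]` with `a' a · c ≡ a (mod f)`
    (a' : ℕ → ℕ)
    (ha' : ∀ a, 1 ≤ a → a ≤ f → Nat.Coprime a f →
      1 ≤ a' a ∧ a' a ≤ f ∧ a' a * c ≡ a [MOD f])
    -- `lam a = λ_a(c) := (a' a · c − a)/f ∈ ℤ`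
    (lam : ℕ → ℤ)
    (hlam : ∀ a, 1 ≤ a → a ≤ f → Nat.Coprime a f →
      lam a * f = (a' a : ℤ) * c - a) :
    -- the difference lies in `p^{n+1}·ℤ_p[(ℤ/fℤ)ˣ]`
    ∃ y : MonoidAlgebra ℚ_[p] (ZMod f)ˣ,
      (∀ g : (ZMod f)ˣ, ∃ z : ℤ_[p], y.coeff g = (z : ℚ_[p])) ∧
      (1 - ((c : ℚ_[p]) ^ φ) •
            MonoidAlgebra.single (ZMod.unitOfCoprime c hc) (1 : ℚ_[p])) * aElt p φ f
        - (∑ a ∈ Finset.Icc 1 f,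
            if h : Nat.Coprime a f then
              ((lam a : ℚ_[p]) * (a : ℚ_[p])⁻¹) •
                MonoidAlgebra.single (ZMod.unitOfCoprime a h) (1 : ℚ_[p])
            else 0)
      = ((p : ℚ_[p]) ^ (n + 1)) • y :=
  statement10_general p n q hq φ hφ f hmul c hc a' ha' lam hlam
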